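/- arXiv:1104.4160 — 4 statements merged into one kernel-verified Lean document; each statement's English description precedes it below -/
import Mathlib

section
/- Let G be a finite simple graph, let M0 be a maximal matching in G of size m, let V(M0) denote the set of endpoints of edges of M0, and let V* = V(G) \ V(M0). Let k be a natural number and let v ∈ V(M0) be a vertex with m + |N(v) ∩ V*| > 2k, where N(v) is the neighborhood of v. Then every edge dominating set M of G with |M| ≤ k satisfies v ∈ V(M), i.e. v is an endpoint of some edge of M. -/
/-!
Suppose `v` is not covered by `M`, and let `W` be the set of endpoints of edges of `M`, so
`|W| ≤ 2k`. Every edge `vu` with `u ∈ V*` is dominated by `M` at `u`, so these `u` lie in `W`.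
Every edge of `M0` is dominated by `M` at a vertex of `W ∩ V(M0)`, and since the edges of `M0`
are disjoint these vertices are distinct. Thus `W` contains `m` vertices of `V(M0)` and
`|N(v) ∩ V*|` vertices outside it, contradicting `m + |N(v) ∩ V*| > 2k`.
-/

section

open Finset

variable {V : Type*} [DecidableEq V]

def edgeVerts (M : Finset (Sym2 V)) : Finset V := M.biUnion Sym2.toFinset

theorem mem_edgeVerts {M : Finset (Sym2 V)} {x : V} : x ∈ edgeVerts M ↔ ∃ e ∈ M, x ∈ e := by
  simp only [edgeVerts, mem_biUnion, Sym2.mem_toFinset]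

theorem card_edgeVerts_le (M : Finset (Sym2 V)) : #(edgeVerts M) ≤ 2 * #M := by
  calc #(edgeVerts M) ≤ ∑ e ∈ M, #e.toFinset := card_biUnion_le
    _ ≤ ∑ _e ∈ M, 2 := sum_le_sum fun e _ => by rw [Sym2.card_toFinset]; split_ifs <;> omega
    _ = 2 * #M := by rw [sum_const, smul_eq_mul, mul_comm]

theorem card_le_card_inter_edgeVerts_of_forall_exists_mem {M0 : Finset (Sym2 V)}
    (hM0 : (M0 : Set (Sym2 V)).Pairwise fun e f => ∀ x, x ∈ e → x ∉ f) {W : Finset V}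
    (hW : ∀ e ∈ M0, ∃ x ∈ e, x ∈ W) : #M0 ≤ #(W ∩ edgeVerts M0) := by
  refine card_le_card_of_forall_subsingleton (fun e x => x ∈ e) (fun e he => ?_) ?_
  · obtain ⟨x, hxe, hxW⟩ := hW e he
    exact ⟨x, mem_inter.2 ⟨hxW, mem_edgeVerts.2 ⟨e, he, hxe⟩⟩, hxe⟩
  · rintro x - e ⟨he, hxe⟩ f ⟨hf, hxf⟩
    by_contra hne
    exact hM0 he hf hne x hxe hxf

theorem mem_edgeVerts_of_adj_of_notMem {G : SimpleGraph V} {M : Finset (Sym2 V)}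
    (hM : ∀ e ∈ G.edgeSet, ∃ f ∈ M, ∃ x, x ∈ e ∧ x ∈ f) {v u : V}
    (hv : v ∉ edgeVerts M) (hvu : G.Adj v u) : u ∈ edgeVerts M := by
  obtain ⟨f, hf, x, hx, hxf⟩ := hM s(v, u) hvu
  rcases Sym2.mem_iff.1 hx with rfl | rfl
  · exact absurd (mem_edgeVerts.2 ⟨f, hf, hxf⟩) hv
  · exact mem_edgeVerts.2 ⟨f, hf, hxf⟩

end

theorem overloaded_vertex_in_eds_general {V : Type*} [Fintype V] [DecidableEq V]
    (G : SimpleGraph V) [DecidableRel G.Adj] (M0 : Finset (Sym2 V)) (m k : ℕ)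
    (hM0E : ↑M0 ⊆ G.edgeSet)
    (hM0match : (M0 : Set (Sym2 V)).Pairwise fun e f => ∀ x, x ∈ e → x ∉ f)
    (hm : M0.card = m)
    (v : V)
    (hover : 2 * k < m + ((G.neighborFinset v).filter fun u => ∀ e ∈ M0, u ∉ e).card)
    (M : Finset (Sym2 V))
    (hMdom : ∀ e ∈ G.edgeSet, ∃ f ∈ M, ∃ x, x ∈ e ∧ x ∈ f)
    (hMcard : M.card ≤ k) :
    ∃ e ∈ M, v ∈ e := by
  by_contra hv
  rw [← mem_edgeVerts] at hv
  set S := (G.neighborFinset v).filter fun u => ∀ e ∈ M0, u ∉ e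
  set W := edgeVerts M
  have hSW : S ⊆ W := fun u hu => mem_edgeVerts_of_adj_of_notMem hMdom hv
    ((G.mem_neighborFinset v u).1 (Finset.mem_filter.1 hu).1)
  have hM0W : m ≤ (W ∩ edgeVerts M0).card := hm ▸
    card_le_card_inter_edgeVerts_of_forall_exists_mem hM0match fun e he => by
      obtain ⟨f, hf, x, hxe, hxf⟩ := hMdom e (hM0E he)
      exact ⟨x, hxe, mem_edgeVerts.2 ⟨f, hf, hxf⟩⟩
  have hdisj : Disjoint (W ∩ edgeVerts M0) S := Finset.disjoint_left.2 fun x hx hxS => by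
    obtain ⟨e, he, hxe⟩ := mem_edgeVerts.1 (Finset.mem_inter.1 hx).2
    exact (Finset.mem_filter.1 hxS).2 e he hxe
  have hcard : (W ∩ edgeVerts M0).card + S.card ≤ W.card := by
    rw [← Finset.card_union_of_disjoint hdisj]
    exact Finset.card_le_card (Finset.union_subset Finset.inter_subset_left hSW)
  have hW : W.card ≤ 2 * M.card := card_edgeVerts_le M
  omega

/-- Let `M0` be a maximal matching of size `m` in a finite simple graph `G`, let
`V* = V \ V(M0)`, and let `v ∈ V(M0)` be a vertex with `m + |N(v) ∩ V*| > 2k`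
(an "overloaded" vertex).  Then every edge dominating set `M` of `G` with
`|M| ≤ k` contains `v` among the endpoints of its edges. -/
theorem overloaded_vertex_in_eds {V : Type*} [Fintype V] [DecidableEq V]
    (G : SimpleGraph V) [DecidableRel G.Adj] (M0 : Finset (Sym2 V)) (m k : ℕ)
    (hM0E : ↑M0 ⊆ G.edgeSet)
    (hM0match : (M0 : Set (Sym2 V)).Pairwise fun e f => ∀ x, x ∈ e → x ∉ f)
    (hM0max : ∀ e ∈ G.edgeSet, e ∉ M0 →
      ¬ ((insert e M0 : Finset (Sym2 V)) : Set (Sym2 V)).Pairwise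
          fun e f => ∀ x, x ∈ e → x ∉ f)
    (hm : M0.card = m)
    (v : V) (hv : ∃ e ∈ M0, v ∈ e)
    (hover : 2 * k < m + ((G.neighborFinset v).filter fun u => ∀ e ∈ M0, u ∉ e).card)
    (M : Finset (Sym2 V))
    (hME : ↑M ⊆ G.edgeSet)
    (hMdom : ∀ e ∈ G.edgeSet, ∃ f ∈ M, ∃ x, x ∈ e ∧ x ∈ f)
    (hMcard : M.card ≤ k) :
    ∃ e ∈ M, v ∈ e :=
  overloaded_vertex_in_eds_general G M0 m k hM0E hM0match hm v hover M hMdom hMcard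
end

section
/- Let G be a finite simple graph, let M0 be a matching in G, and let M be an edge dominating set of G. Then |M0| ≤ 2·|M|. -/
/-!
Every edge of the matching `M0` meets the vertex set `V(M)` of the edge dominating set `M`,
and since the edges of `M0` are pairwise disjoint, distinct edges of `M0` meet `V(M)` in
distinct vertices. Hence `|M0| ≤ |V(M)| ≤ 2 |M|`.
-/

open Finset

namespace Sym2

variable {α : Type*}

theorem card_toFinset_le_two [DecidableEq α] (z : Sym2 α) : #z.toFinset ≤ 2 := by
  rw [card_toFinset]
  split_ifs <;> omega

theorem card_biUnion_toFinset_le [DecidableEq α] (M : Finset (Sym2 α)) :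
    #(M.biUnion toFinset) ≤ 2 * #M := by
  rw [mul_comm]
  exact card_biUnion_le_card_mul M toFinset 2 fun z _ => card_toFinset_le_two z

theorem card_le_card_of_pairwise_disjoint_of_forall_exists_mem {M₀ : Finset (Sym2 α)}
    {S : Finset α} (hdisj : (M₀ : Set (Sym2 α)).Pairwise fun e f => ∀ x, x ∈ e → x ∉ f)
    (hmeet : ∀ e ∈ M₀, ∃ x ∈ S, x ∈ e) : #M₀ ≤ #S :=
  card_le_card_of_forall_subsingleton (fun e x => x ∈ e) hmeet fun x _ e he f hf => by
    by_contra hne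
    exact hdisj he.1 hf.1 hne x he.2 hf.2

end Sym2

theorem matching_card_le_two_mul_eds_general {V : Type*}
    (G : SimpleGraph V) (M0 M : Finset (Sym2 V))
    (hM0E : ↑M0 ⊆ G.edgeSet)
    (hM0match : (M0 : Set (Sym2 V)).Pairwise fun e f => ∀ x, x ∈ e → x ∉ f)
    (hMdom : ∀ e ∈ G.edgeSet, ∃ f ∈ M, ∃ x, x ∈ e ∧ x ∈ f) :
    M0.card ≤ 2 * M.card := by
  classical
  have hmeet : ∀ e ∈ M0, ∃ x ∈ M.biUnion Sym2.toFinset, x ∈ e := fun e he => by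
    obtain ⟨f, hf, x, hxe, hxf⟩ := hMdom e (hM0E he)
    exact ⟨x, mem_biUnion.2 ⟨f, hf, Sym2.mem_toFinset.2 hxf⟩, hxe⟩
  calc #M0 ≤ #(M.biUnion Sym2.toFinset) :=
        Sym2.card_le_card_of_pairwise_disjoint_of_forall_exists_mem hM0match hmeet
    _ ≤ 2 * #M := Sym2.card_biUnion_toFinset_le M

/-- If `M0` is a matching in a finite simple graph `G` and `M` is an edge
dominating set of `G`, then `|M0| ≤ 2 * |M|`. -/
theorem matching_card_le_two_mul_eds {V : Type*} [Fintype V]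
    (G : SimpleGraph V) (M0 M : Finset (Sym2 V))
    (hM0E : ↑M0 ⊆ G.edgeSet)
    (hM0match : (M0 : Set (Sym2 V)).Pairwise fun e f => ∀ x, x ∈ e → x ∉ f)
    (hME : ↑M ⊆ G.edgeSet)
    (hMdom : ∀ e ∈ G.edgeSet, ∃ f ∈ M, ∃ x, x ∈ e ∧ x ∈ f) :
    M0.card ≤ 2 * M.card :=
  matching_card_le_two_mul_eds_general G M0 M hM0E hM0match hMdom
end

section
/- Let G be a finite simple graph and let C be a minimal vertex cover of G (C is a vertex cover and no proper subset of C is a vertex cover). Then G has an edge dominating set M such that C ⊆ V(M) and |M| ≤ |C| − ν(G[C]), where ν(G[C]) is the maximum size of a matching in the subgraph of G induced by C. -/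
/-!
Take a maximum matching `N` of `G[C]`; it covers `2 ν(G[C])` vertices of `C`. By minimality
every other vertex `v` of `C` has a neighbour outside `C` (otherwise `C \ {v}` would still be a
cover), and adding one such edge for each of them to `N` gives at most
`ν + (|C| - 2ν) = |C| - ν` edges whose endpoints contain `C`. Since `C` is a vertex cover, these
edges dominate every edge of `G`.
-/

/-- `N` is a matching in the simple graph `G`: a set of edges of `G` that are
pairwise vertex-disjoint. -/
def IsMatchingIn {W : Type*} (G : SimpleGraph W) (N : Finset (Sym2 W)) : Prop :=
  ↑N ⊆ G.edgeSet ∧ (N : Set (Sym2 W)).Pairwise fun e f => ∀ x, x ∈ e → x ∉ f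

/-- The matching number of a simple graph: the maximum size of a matching. -/
noncomputable def matchingNumber {W : Type*} (G : SimpleGraph W) : ℕ :=
  sSup {n | ∃ N : Finset (Sym2 W), IsMatchingIn G N ∧ N.card = n}

section Matching

variable {V W : Type*}

theorem exists_isMatchingIn_card_eq_matchingNumber [Finite W] (G : SimpleGraph W) :
    ∃ N : Finset (Sym2 W), IsMatchingIn G N ∧ N.card = matchingNumber G := by
  have := Fintype.ofFinite W
  refine (Nat.sSup_mem (s := {n | ∃ N : Finset (Sym2 W), IsMatchingIn G N ∧ N.card = n}) ?_ ?_)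
  · exact ⟨0, ∅, ⟨by simp, by simp⟩, rfl⟩
  · refine ⟨Fintype.card (Sym2 W), ?_⟩
    rintro _ ⟨N, -, rfl⟩
    exact N.card_le_univ

theorem IsMatchingIn.map {G : SimpleGraph V} {G' : SimpleGraph W} (f : G ↪g G')
    {N : Finset (Sym2 V)} (hN : IsMatchingIn G N) :
    IsMatchingIn G' (N.map f.toEmbedding.sym2Map) := by
  refine ⟨?_, ?_⟩
  · simp only [Finset.coe_map, Set.image_subset_iff]
    exact fun e he => f.toHom.map_mem_edgeSet (hN.1 he)
  · simp only [Finset.coe_map]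
    rintro _ ⟨e, he, rfl⟩ _ ⟨e', he', rfl⟩ hne x hx hx'
    obtain ⟨y, hy, rfl⟩ := Sym2.mem_map.mp hx
    obtain ⟨y', hy', hyy'⟩ := Sym2.mem_map.mp hx'
    cases f.injective hyy'
    exact hN.2 he he' (fun h => hne (h ▸ rfl)) y hy hy'

theorem IsMatchingIn.card_biUnion_toFinset [DecidableEq W] {G : SimpleGraph W}
    {N : Finset (Sym2 W)} (hN : IsMatchingIn G N) :
    (N.biUnion Sym2.toFinset).card = 2 * N.card := by
  rw [Finset.card_biUnion, Finset.sum_const_nat, mul_comm]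
  · exact fun e he => Sym2.card_toFinset_of_not_isDiag e (G.not_isDiag_of_mem_edgeSet (hN.1 he))
  · intro e he e' he' hne
    exact Finset.disjoint_left.mpr fun x hx hx' =>
      hN.2 he he' hne x (Sym2.mem_toFinset.mp hx) (Sym2.mem_toFinset.mp hx')

end Matching

namespace SimpleGraph

variable {V : Type*}

theorem exists_adj_notMem_of_minimal_cover [DecidableEq V] {G : SimpleGraph V} {C : Finset V}
    (hcover : ∀ u w, G.Adj u w → u ∈ C ∨ w ∈ C)
    (hmin : ∀ D : Finset V, D ⊂ C → ¬ ∀ u w, G.Adj u w → u ∈ D ∨ w ∈ D)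
    {v : V} (hv : v ∈ C) : ∃ w, G.Adj v w ∧ w ∉ C := by
  by_contra! h
  refine hmin (C.erase v) (C.erase_ssubset hv) fun u w huw => ?_
  simp only [Finset.mem_erase]
  rcases hcover u w huw with hu | hw
  · by_cases huv : u = v
    · subst huv; exact .inr ⟨huw.ne.symm, h w huw⟩
    · exact .inl ⟨huv, hu⟩
  · by_cases hwv : w = v
    · subst hwv; exact .inl ⟨huw.ne, h u huw.symm⟩
    · exact .inr ⟨hwv, hw⟩

theorem exists_edges_covering_of_uncovered_adj [DecidableEq V] {G : SimpleGraph V}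
    {N : Finset (Sym2 V)} (hN : ↑N ⊆ G.edgeSet) {T : Finset V}
    (hT : ∀ v ∈ T \ N.biUnion Sym2.toFinset, ∃ w, G.Adj v w) :
    ∃ M : Finset (Sym2 V), ↑M ⊆ G.edgeSet ∧ (∀ v ∈ T, ∃ e ∈ M, v ∈ e) ∧
      M.card ≤ N.card + (T \ N.biUnion Sym2.toFinset).card := by
  choose! w hw using hT
  refine ⟨N ∪ (T \ N.biUnion Sym2.toFinset).image fun v => s(v, w v), ?_, fun v hv => ?_, ?_⟩
  · simp only [Finset.coe_union, Finset.coe_image, Set.union_subset_iff, Set.image_subset_iff]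
    exact ⟨hN, fun v hv => hw v hv⟩
  · by_cases hvN : v ∈ N.biUnion Sym2.toFinset
    · obtain ⟨e, he, hve⟩ := Finset.mem_biUnion.mp hvN
      exact ⟨e, Finset.mem_union_left _ he, Sym2.mem_toFinset.mp hve⟩
    · exact ⟨s(v, w v), Finset.mem_union_right _
        (Finset.mem_image_of_mem _ (Finset.mem_sdiff.mpr ⟨hv, hvN⟩)), Sym2.mem_mk_left _ _⟩
  · exact (Finset.card_union_le _ _).trans (Nat.add_le_add_left Finset.card_image_le _)

theorem dominating_of_cover_subset_verts {G : SimpleGraph V} {C : Finset V}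
    {M : Finset (Sym2 V)} (hcover : ∀ u w, G.Adj u w → u ∈ C ∨ w ∈ C)
    (hCM : ∀ v ∈ C, ∃ e ∈ M, v ∈ e) :
    ∀ e ∈ G.edgeSet, ∃ f ∈ M, ∃ x, x ∈ e ∧ x ∈ f := by
  intro e he
  induction e using Sym2.ind with
  | _ u w =>
    rcases hcover u w he with hu | hw
    · obtain ⟨f, hf, huf⟩ := hCM u hu
      exact ⟨f, hf, u, Sym2.mem_mk_left _ _, huf⟩
    · obtain ⟨f, hf, hwf⟩ := hCM w hw
      exact ⟨f, hf, w, Sym2.mem_mk_right _ _, hwf⟩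

end SimpleGraph

open SimpleGraph

theorem minimal_vertex_cover_eds_general {V : Type*}
    (G : SimpleGraph V) (C : Finset V)
    (hcover : ∀ u w : V, G.Adj u w → u ∈ C ∨ w ∈ C)
    (hmin : ∀ D : Finset V, D ⊂ C → ¬ ∀ u w : V, G.Adj u w → u ∈ D ∨ w ∈ D) :
    ∃ M : Finset (Sym2 V),
      ↑M ⊆ G.edgeSet ∧
      (∀ e ∈ G.edgeSet, ∃ f ∈ M, ∃ x, x ∈ e ∧ x ∈ f) ∧
      (∀ v ∈ C, ∃ e ∈ M, v ∈ e) ∧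
      M.card ≤ C.card - matchingNumber (G.induce (↑C : Set V)) := by
  classical
  obtain ⟨N₀, hN₀, hN₀card⟩ := exists_isMatchingIn_card_eq_matchingNumber (G.induce (↑C : Set V))
  set N := N₀.map (Embedding.induce (G := G) (↑C : Set V)).toEmbedding.sym2Map
  have hN : IsMatchingIn G N := hN₀.map _
  have hNC : N.biUnion Sym2.toFinset ⊆ C := by
    intro x hx
    obtain ⟨_, he, hxe⟩ := Finset.mem_biUnion.mp hx
    obtain ⟨e, -, rfl⟩ := Finset.mem_map.mp he
    obtain ⟨y, -, rfl⟩ := Sym2.mem_map.mp (Sym2.mem_toFinset.mp hxe)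
    exact y.2
  obtain ⟨M, hMG, hMC, hMcard⟩ := exists_edges_covering_of_uncovered_adj hN.1 fun v hv =>
    (exists_adj_notMem_of_minimal_cover hcover hmin (Finset.mem_sdiff.mp hv).1).imp
      fun _ => And.left
  refine ⟨M, hMG, dominating_of_cover_subset_verts hcover hMC, hMC, ?_⟩
  have hcardN : N.card = matchingNumber (G.induce (↑C : Set V)) := by
    rw [Finset.card_map, hN₀card]
  have h2N := hN.card_biUnion_toFinset
  rw [Finset.card_sdiff_of_subset hNC] at hMcard
  have := Finset.card_le_card hNC
  omega

/-- If `C` is a minimal vertex cover of a finite simple graph `G`, then `G` has an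
edge dominating set `M` with `C ⊆ V(M)` and `|M| ≤ |C| - ν(G[C])`, where `ν(G[C])`
is the matching number of the subgraph of `G` induced by `C`. -/
theorem minimal_vertex_cover_eds {V : Type*} [Fintype V] [DecidableEq V]
    (G : SimpleGraph V) (C : Finset V)
    (hcover : ∀ u w : V, G.Adj u w → u ∈ C ∨ w ∈ C)
    (hmin : ∀ D : Finset V, D ⊂ C → ¬ ∀ u w : V, G.Adj u w → u ∈ D ∨ w ∈ D) :
    ∃ M : Finset (Sym2 V),
      ↑M ⊆ G.edgeSet ∧
      (∀ e ∈ G.edgeSet, ∃ f ∈ M, ∃ x, x ∈ e ∧ x ∈ f) ∧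
      (∀ v ∈ C, ∃ e ∈ M, v ∈ e) ∧
      M.card ≤ C.card - matchingNumber (G.induce (↑C : Set V)) :=
  minimal_vertex_cover_eds_general G C hcover hmin
end

section
/- Let G be a finite simple graph and let u be a vertex of G such that every neighbor of u has at least one neighbor different from u. If G has an edge dominating set of size k, then the induced subgraph G − u (on the vertex set V(G) \ {u}) has an edge dominating set of size at most k. -/
/-!
Replace every edge `uw` of the dominating set by an edge `wx` with `x ≠ u`, which exists by
hypothesis, and keep the edges avoiding `u`. This gives at most `k` edges of `G - u`, and they
still dominate `G - u`: an edge avoiding `u` met the old set at a vertex other than `u`, and every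
such vertex survives the replacement.
-/

/-- `M` is an edge dominating set of the simple graph `G`: a set of edges of `G`
such that every edge of `G` shares an endpoint with some edge of `M`. -/
def IsEdgeDomSet {W : Type*} (G : SimpleGraph W) (M : Finset (Sym2 W)) : Prop :=
  ↑M ⊆ G.edgeSet ∧ ∀ e ∈ G.edgeSet, ∃ f ∈ M, ∃ x, x ∈ e ∧ x ∈ f

open Finset

namespace SimpleGraph

variable {V : Type*} {G : SimpleGraph V}

theorem exists_edge_avoiding_of_mem_edgeSet {u : V}
    (hu : ∀ w, G.Adj u w → ∃ x, G.Adj w x ∧ x ≠ u) {e : Sym2 V} (he : e ∈ G.edgeSet) :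
    ∃ f ∈ G.edgeSet, (∀ x ∈ f, x ≠ u) ∧ ∀ x ∈ e, x ≠ u → x ∈ f := by
  by_cases hue : u ∈ e
  · obtain ⟨w, rfl⟩ := Sym2.mem_iff_exists.mp hue
    obtain ⟨x, hwx, hxu⟩ := hu w he
    refine ⟨s(w, x), hwx, ?_, ?_⟩
    · simp only [Sym2.mem_iff]
      rintro y (rfl | rfl)
      · exact he.ne'
      · exact hxu
    · simp +contextual [Sym2.mem_iff]
  · exact ⟨e, he, fun x hx hxu => hue (hxu ▸ hx), fun x hx _ => hx⟩

theorem exists_isEdgeDomSet_induce {s : Set V} {N : Finset (Sym2 V)} (hN : ↑N ⊆ G.edgeSet)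
    (hNs : ∀ f ∈ N, ∀ x ∈ f, x ∈ s)
    (hdom : ∀ e ∈ G.edgeSet, (∀ x ∈ e, x ∈ s) → ∃ f ∈ N, ∃ x, x ∈ e ∧ x ∈ f) :
    ∃ M : Finset (Sym2 s), IsEdgeDomSet (G.induce s) M ∧ #M ≤ #N := by
  classical
  have hinj := Sym2.map.injective (Subtype.val_injective (p := (· ∈ s)))
  refine ⟨N.preimage _ hinj.injOn, ⟨fun f hf => ?_, fun e he => ?_⟩, ?_⟩
  · exact (Embedding.induce s).map_mem_edgeSet_iff.mp (hN (mem_preimage.mp hf))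
  · have he' : e.map Subtype.val ∈ G.edgeSet := (Embedding.induce s).map_mem_edgeSet_iff.mpr he
    have he's : ∀ x ∈ e.map Subtype.val, x ∈ s := by
      rintro _ hx
      obtain ⟨y, -, rfl⟩ := Sym2.mem_map.mp hx
      exact y.2
    obtain ⟨f, hf, x, hxe, hxf⟩ := hdom _ he' he's
    obtain ⟨y, hye, rfl⟩ := Sym2.mem_map.mp hxe
    refine ⟨f.attachWith (hNs f hf), ?_, y, hye, ?_⟩
    · simpa [Sym2.attachWith_map_subtypeVal] using hf
    · rw [Sym2.attachWith, Sym2.mem_pmap_iff]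
      exact ⟨y, hxf, rfl⟩
  · exact card_le_card_of_injOn _ (fun f hf => mem_preimage.mp hf) hinj.injOn

end SimpleGraph

theorem IsEdgeDomSet.exists_avoiding {V : Type*} {G : SimpleGraph V} {u : V}
    (hu : ∀ w, G.Adj u w → ∃ x, G.Adj w x ∧ x ≠ u) {M : Finset (Sym2 V)} (hM : IsEdgeDomSet G M) :
    ∃ N : Finset (Sym2 V), ↑N ⊆ G.edgeSet ∧ (∀ f ∈ N, ∀ x ∈ f, x ≠ u) ∧
      (∀ e ∈ G.edgeSet, (∀ x ∈ e, x ≠ u) → ∃ f ∈ N, ∃ x, x ∈ e ∧ x ∈ f) ∧ #N ≤ #M := by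
  classical
  have hrep (e : Sym2 V) : ∃ f, e ∈ G.edgeSet →
      f ∈ G.edgeSet ∧ (∀ x ∈ f, x ≠ u) ∧ ∀ x ∈ e, x ≠ u → x ∈ f := by
    by_cases he : e ∈ G.edgeSet
    · obtain ⟨f, hf⟩ := G.exists_edge_avoiding_of_mem_edgeSet hu he
      exact ⟨f, fun _ => hf⟩
    · exact ⟨e, fun h => absurd h he⟩
  choose r hr using hrep
  refine ⟨M.image r, ?_, ?_, fun e he heu => ?_, card_image_le⟩
  · simpa [Set.subset_def] using fun f hf => (hr f (hM.1 hf)).1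
  · simpa using fun f hf => (hr f (hM.1 hf)).2.1
  · obtain ⟨f, hf, x, hxe, hxf⟩ := hM.2 e he
    exact ⟨r f, mem_image_of_mem r hf, x, hxe, (hr f (hM.1 hf)).2.2 x hxf (heu x hxe)⟩

theorem delete_vertex_eds_general {V : Type*}
    (G : SimpleGraph V) (u : V)
    (hu : ∀ w : V, G.Adj u w → ∃ x : V, G.Adj w x ∧ x ≠ u)
    (k : ℕ)
    (hG : ∃ M : Finset (Sym2 V), IsEdgeDomSet G M ∧ M.card = k) :
    ∃ M' : Finset (Sym2 ({u}ᶜ : Set V)),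
      IsEdgeDomSet (G.induce ({u}ᶜ : Set V)) M' ∧ M'.card ≤ k := by
  obtain ⟨M, hM, rfl⟩ := hG
  obtain ⟨N, hN, hNu, hNdom, hNM⟩ := hM.exists_avoiding hu
  obtain ⟨M', hM', hM'N⟩ := SimpleGraph.exists_isEdgeDomSet_induce hN hNu hNdom
  exact ⟨M', hM', hM'N.trans hNM⟩

/-- Let `u` be a vertex of a finite simple graph `G` such that every neighbor of
`u` has a neighbor different from `u`.  If `G` has an edge dominating set of size
`k`, then the induced subgraph `G - u` has an edge dominating set of size at most
`k`. -/
theorem delete_vertex_eds {V : Type*} [Fintype V] [DecidableEq V]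
    (G : SimpleGraph V) (u : V)
    (hu : ∀ w : V, G.Adj u w → ∃ x : V, G.Adj w x ∧ x ≠ u)
    (k : ℕ)
    (hG : ∃ M : Finset (Sym2 V), IsEdgeDomSet G M ∧ M.card = k) :
    ∃ M' : Finset (Sym2 ({u}ᶜ : Set V)),
      IsEdgeDomSet (G.induce ({u}ᶜ : Set V)) M' ∧ M'.card ≤ k :=
  delete_vertex_eds_general G u hu k hG
end
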